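/- Differential equation: for every n ≥ 1, y = B_n^{[m-1]}(x) satisfies (B_n^{[m-1]}/n!) y^{(n)} + (B_{n-1}^{[m-1]}/(n-1)!) y^{(n-1)} + ⋯ + (B_2^{[m-1]}/2!) y'' + (m-1)!(1/(m+1) - x) y' + n(m-1)! y = 0. -/

import Mathlib

open scoped Nat Real

/-- The partial sum `∑_{l=0}^{m-1} z^l / l!` of the exponential series. -/
noncomputable def expPartialSum (m : ℕ) : PowerSeries ℝ :=
  ∑ l ∈ Finset.range m, PowerSeries.C ((1 : ℝ) / l !) * PowerSeries.X ^ l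

/-- `B : ℕ → ℝ → ℝ` is the family of generalized Bernoulli polynomials of level `m`,
i.e. `z^m e^{xz} / (e^z - ∑_{l=0}^{m-1} z^l/l!) = ∑ B n x * z^n / n!`, stated
multiplicatively. -/
noncomputable def IsGenBernoulli (m : ℕ) (B : ℕ → ℝ → ℝ) : Prop :=
  ∀ x : ℝ,
    (PowerSeries.exp ℝ - expPartialSum m) * PowerSeries.mk (fun n => B n x / n !) =
      PowerSeries.X ^ m * PowerSeries.mk (fun n => x ^ n / n !)

/-! With `g = ∑ B_k(0) z^k/k!` (`egf B 0`) and `T = z^{-m} (e^z - ∑_{l<m} z^l/l!)` (`expTail m`),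
the defining identity says `T g = 1` and `∑ B_n(x) z^n/n! = g e^{xz}`; in particular `B_n' = n B_{n-1}`, and
`B_0(0) = m!`, `B_1(0) = -m!/(m+1)` are the first two coefficients of `T g = 1`.
Since `z T' = (z - m) T + 1/(m-1)!`, the series `g` satisfies the Riccati equation
`z g' + z g + g²/(m-1)! = m g`. Multiplying it by `e^{xz}` shows that
`(g - B_0(0) - B_1(0) z) G + (m-1)! (1/(m+1) - x) z G + (m-1)! z ∂_z G = 0` for `G = g e^{xz}`,
and the coefficient of `z^n/n!` in this identity is the differential equation. -/

open PowerSeries Finset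

noncomputable def expSeries (x : ℝ) : ℝ⟦X⟧ := mk fun n => x ^ n / n !

noncomputable def expTail (m : ℕ) : ℝ⟦X⟧ := mk fun n => 1 / (n + m)!

theorem exp_sub_expPartialSum (m : ℕ) : exp ℝ - expPartialSum m = X ^ m * expTail m := by
  ext n
  simp only [expPartialSum, expTail, map_sub, map_sum, coeff_exp, coeff_C_mul, coeff_X_pow,
    coeff_X_pow_mul', coeff_mk, mul_ite, mul_one, mul_zero, sum_ite_eq, mem_range]
  rcases lt_or_ge n m with h | h
  · simp [h, not_le.mpr h]
  · simp [h, not_lt.mpr h, Nat.sub_add_cancel h]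

theorem X_mul_derivative_expTail {m : ℕ} (hm : 0 < m) :
    X * d⁄dX ℝ (expTail m) = (X - C (m : ℝ)) * expTail m + C (1 / (m - 1)! : ℝ) := by
  ext (_ | n)
  · simp only [expTail, sub_mul, map_add, map_sub, coeff_zero_X_mul, coeff_C_mul, coeff_C,
      coeff_mk, if_true, zero_add]
    rw [← Nat.mul_factorial_pred hm.ne']
    push_cast
    field_simp
    ring
  · simp only [expTail, sub_mul, map_add, map_sub, coeff_succ_X_mul, coeff_C_mul, coeff_C,
      coeff_derivative, coeff_mk, Nat.succ_ne_zero, if_false, add_zero]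
    rw [show n + 1 + m = n + m + 1 by ring, Nat.factorial_succ]
    push_cast
    field_simp
    ring

theorem expSeries_zero : expSeries 0 = 1 := by
  ext (_ | n) <;> simp [expSeries]

theorem derivative_expSeries (x : ℝ) : d⁄dX ℝ (expSeries x) = C x * expSeries x := by
  ext n
  simp only [expSeries, coeff_derivative, coeff_C_mul, coeff_mk, Nat.factorial_succ]
  push_cast
  field_simp
  ring

theorem hasDerivAt_pow_succ_div_factorial (n : ℕ) (x : ℝ) :
    HasDerivAt (fun y : ℝ => y ^ (n + 1) / (n + 1)!) (x ^ n / n !) x := by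
  refine ((hasDerivAt_pow (n + 1) x).div_const ((n + 1)! : ℝ)).congr_deriv ?_
  rw [Nat.factorial_succ, Nat.add_sub_cancel]
  push_cast
  field_simp

theorem hasDerivAt_coeff_succ_mul_expSeries (f : ℝ⟦X⟧) (n : ℕ) (x : ℝ) :
    HasDerivAt (fun y => coeff (n + 1) (f * expSeries y)) (coeff n (f * expSeries x)) x := by
  simp only [coeff_mul, Nat.sum_antidiagonal_succ', expSeries, coeff_mk, pow_zero,
    Nat.factorial_zero, Nat.cast_one, div_one, mul_one]
  exact (HasDerivAt.fun_sum fun (p : ℕ × ℕ) _ =>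
    (hasDerivAt_pow_succ_div_factorial p.2 x).const_mul (coeff p.1 f)).const_add _

noncomputable def egf (B : ℕ → ℝ → ℝ) (x : ℝ) : ℝ⟦X⟧ := mk fun n => B n x / n !

namespace IsGenBernoulli

variable {m : ℕ} {B : ℕ → ℝ → ℝ}

theorem expTail_mul_egf (hB : IsGenBernoulli m B) (x : ℝ) :
    expTail m * egf B x = expSeries x := by
  refine mul_left_cancel₀ (pow_ne_zero m X_ne_zero) ?_
  rw [← mul_assoc, ← exp_sub_expPartialSum]
  exact hB x

theorem expTail_mul_egf_zero (hB : IsGenBernoulli m B) : expTail m * egf B 0 = 1 :=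
  expSeries_zero ▸ hB.expTail_mul_egf 0

theorem egf_eq_mul (hB : IsGenBernoulli m B) (x : ℝ) : egf B x = egf B 0 * expSeries x := by
  linear_combination (-egf B x) * hB.expTail_mul_egf_zero + egf B 0 * hB.expTail_mul_egf x

theorem apply_zero_zero (hB : IsGenBernoulli m B) : B 0 0 = m ! := by
  have h := congrArg (coeff 0) hB.expTail_mul_egf_zero
  simp only [expTail, egf, coeff_mul, HasAntidiagonal.antidiagonal_zero, coeff_mk, sum_singleton,
    zero_add, Nat.factorial_zero, Nat.cast_one, div_one, coeff_one, if_true] at h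
  field_simp at h
  linarith

theorem apply_one_zero (hB : IsGenBernoulli m B) : B 1 0 = -m ! / (m + 1) := by
  have h := congrArg (coeff 1) hB.expTail_mul_egf_zero
  simp only [expTail, egf, coeff_mul, coeff_mk, Nat.sum_antidiagonal_succ, zero_add,
    Nat.factorial_one, Nat.cast_one, div_one, HasAntidiagonal.antidiagonal_zero, sum_singleton,
    hB.apply_zero_zero, Nat.factorial_zero, coeff_one, one_ne_zero, if_false] at h
  rw [add_comm 1 m, Nat.factorial_succ] at h
  push_cast at h
  field_simp at h ⊢
  linarith

theorem riccati (hm : 0 < m) (hB : IsGenBernoulli m B) :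
    X * d⁄dX ℝ (egf B 0) + X * egf B 0 + C (1 / (m - 1)! : ℝ) * egf B 0 ^ 2 =
      C (m : ℝ) * egf B 0 := by
  have hT := hB.expTail_mul_egf_zero
  have hdT : d⁄dX ℝ (expTail m) * egf B 0 + expTail m * d⁄dX ℝ (egf B 0) = 0 := by
    simpa [Derivation.leibniz, add_comm, mul_comm] using congrArg (d⁄dX ℝ) hT
  linear_combination (-(X * d⁄dX ℝ (egf B 0) + (X - C (m : ℝ)) * egf B 0)) * hT +
    X * egf B 0 * hdT - egf B 0 ^ 2 * X_mul_derivative_expTail hm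

theorem apply_zero (hB : IsGenBernoulli m B) (x : ℝ) : B 0 x = B 0 0 := by
  simpa [egf, expSeries] using congrArg (coeff 0) (hB.egf_eq_mul x)

theorem hasDerivAt_div_factorial (hB : IsGenBernoulli m B) (n : ℕ) (x : ℝ) :
    HasDerivAt (fun y => B (n + 1) y / (n + 1)!) (B n x / n !) x := by
  have h := hasDerivAt_coeff_succ_mul_expSeries (egf B 0) n x
  simp only [← hB.egf_eq_mul] at h
  simpa only [egf, coeff_mk, Nat.cast_succ] using h

theorem iteratedDeriv_eq (hB : IsGenBernoulli m B) {k n : ℕ} (hkn : k ≤ n) (x : ℝ) :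
    iteratedDeriv k (B n) x = n ! * (B (n - k) x / (n - k)!) := by
  induction k generalizing x with
  | zero => rw [iteratedDeriv_zero, Nat.sub_zero]; field_simp
  | succ k ih =>
    obtain ⟨j, hj⟩ : ∃ j, n - k = j + 1 := ⟨n - k - 1, by omega⟩
    rw [iteratedDeriv_succ, funext (ih (by omega)), hj, show n - (k + 1) = j by omega]
    exact ((hB.hasDerivAt_div_factorial j x).const_mul _).deriv

theorem ode_egf_eq_zero (hm : 0 < m) (hB : IsGenBernoulli m B) (x : ℝ) :
    (egf B 0 - C (B 0 0) - C (B 1 0) * X) * egf B x +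
        C ((m - 1)! * (1 / (m + 1) - x) : ℝ) * X * egf B x +
        C ((m - 1)! : ℝ) * X * d⁄dX ℝ (egf B x) = 0 := by
  have hc : ((m - 1)! : ℝ) ≠ 0 := by positivity
  have hmc : ((m - 1)! : ℝ) * m = m ! := by
    exact_mod_cast (mul_comm _ _).trans (Nat.mul_factorial_pred hm.ne')
  have h1 : C ((m - 1)! : ℝ) * C (1 / (m - 1)! : ℝ) = 1 := by
    rw [← map_mul, mul_one_div_cancel hc, map_one]
  have h2 : C ((m - 1)! : ℝ) * C (m : ℝ) = C (B 0 0) := by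
    rw [← map_mul, hmc, hB.apply_zero_zero]
  have h3 : C ((m - 1)! * (1 / (m + 1) - x) : ℝ) + C ((m - 1)! : ℝ) * C x - C ((m - 1)! : ℝ) =
      C (B 1 0) := by
    rw [← map_mul, ← map_add, ← map_sub, hB.apply_one_zero, ← hmc]
    congr 1
    field_simp
    ring
  rw [hB.egf_eq_mul x, Derivation.leibniz, derivative_expSeries, smul_eq_mul, smul_eq_mul]
  linear_combination expSeries x * C ((m - 1)! : ℝ) * hB.riccati hm
    - egf B 0 ^ 2 * expSeries x * h1 + egf B 0 * expSeries x * h2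
    + X * egf B 0 * expSeries x * h3

theorem ode_coeff_eq_zero (hm : 0 < m) (hB : IsGenBernoulli m B) (n : ℕ) (x : ℝ) :
    ∑ k ∈ Icc 2 (n + 1), B k 0 / k ! * (B (n + 1 - k) x / (n + 1 - k)!) +
        (m - 1)! * (1 / (m + 1) - x) * (B n x / n !) +
        (m - 1)! * (B (n + 1) x / (n + 1)! * (n + 1)) = 0 := by
  have hsplit : ∀ f : ℕ → ℝ, ∑ k ∈ range (n + 2), f k = f 0 + f 1 + ∑ k ∈ Icc 2 (n + 1), f k := by
    intro f
    rw [range_eq_Ico, ← Ico_add_one_right_eq_Icc, sum_eq_sum_Ico_succ_bot (by omega),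
      sum_eq_sum_Ico_succ_bot (by omega), add_assoc (f 0)]
    rfl
  have hprod : coeff (n + 1) (egf B 0 * egf B x) =
      ∑ k ∈ range (n + 2), B k 0 / k ! * (B (n + 1 - k) x / (n + 1 - k)!) := by
    rw [coeff_mul, Nat.sum_antidiagonal_eq_sum_range_succ_mk]
    simp only [egf, coeff_mk]
  have h := congrArg (coeff (n + 1)) (hB.ode_egf_eq_zero hm x)
  simp only [sub_mul, map_add, map_sub, mul_assoc, coeff_C_mul, coeff_succ_X_mul,
    coeff_derivative, map_zero] at h
  rw [hprod, hsplit] at h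
  simp only [egf, coeff_mk, Nat.sub_zero, Nat.add_sub_cancel, Nat.factorial_zero,
    Nat.factorial_one, Nat.cast_one, div_one] at h
  linear_combination h

end IsGenBernoulli

theorem stmt_10_general (m : ℕ) (hm : 0 < m) (B : ℕ → ℝ → ℝ) (hB : IsGenBernoulli m B)
    (n : ℕ) (x : ℝ) :
    (∑ k ∈ Finset.Icc 2 n, (B k 0 / (k ! : ℝ)) * iteratedDeriv k (B n) x) +
      ((m - 1)! : ℝ) * (1 / (m + 1) - x) * deriv (B n) x +
      (n : ℝ) * ((m - 1)! : ℝ) * B n x = 0 := by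
  rcases n with _ | n
  · have hderiv : deriv (B 0) x = 0 := by
      rw [funext hB.apply_zero]
      exact deriv_const x _
    simp [hderiv]
  have hsum : ∑ k ∈ Icc 2 (n + 1), B k 0 / k ! * iteratedDeriv k (B (n + 1)) x =
      (n + 1)! * ∑ k ∈ Icc 2 (n + 1), B k 0 / k ! * (B (n + 1 - k) x / (n + 1 - k)!) := by
    rw [mul_sum]
    refine sum_congr rfl fun k hk => ?_
    rw [hB.iteratedDeriv_eq (mem_Icc.mp hk).2]
    ring
  have hderiv : deriv (B (n + 1)) x = (n + 1)! * (B n x / n !) := by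
    simpa using hB.iteratedDeriv_eq (k := 1) (n := n + 1) (by omega) x
  have hcancel : ((n + 1)! : ℝ) * (B (n + 1) x / (n + 1)!) = B (n + 1) x :=
    mul_div_cancel₀ _ (by positivity)
  rw [hsum, hderiv]
  push_cast
  linear_combination (n + 1)! * hB.ode_coeff_eq_zero hm n x - ((m - 1)! * (n + 1) : ℝ) * hcancel

theorem stmt_10 (m : ℕ) (hm : 0 < m) (B : ℕ → ℝ → ℝ) (hB : IsGenBernoulli m B)
    (n : ℕ) (hn : 1 ≤ n) (x : ℝ) :
    (∑ k ∈ Finset.Icc 2 n, (B k 0 / (k ! : ℝ)) * iteratedDeriv k (B n) x) +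
      ((m - 1)! : ℝ) * (1 / (m + 1) - x) * deriv (B n) x +
      (n : ℝ) * ((m - 1)! : ℝ) * B n x = 0 :=
  stmt_10_general m hm B hB n x
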